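/- arXiv:2310.00880 — 2 statements merged into one kernel-verified Lean document; each statement's English description precedes it below -/
import Mathlib

section
/- For the martingale location update, the conditional variance increment satisfies Var(θ_{j,m+1} | F_m) = β_{j,m}²·w_{j,m}²·∫ [k'(y;θ_{j,m})]²/p_m(y) dy, and since p_m(y) ≥ w_{j,m}·k(y;θ_{j,m}), this is bounded above by β_{j,m}²·w_{j,m}·I(θ_{j,m}), where I(θ) = ∫ [k'(y;θ)]²/k(y;θ) dy is the Fisher information. -/
open MeasureTheory

/-- The conditional variance of the BBM location update equals
β² w_j² ∫ k'(y;θ_j)²/p(y) dy, and since p(y) ≥ w_j k(y;θ_j) it is bounded above by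
β² w_j I(θ_j) where I is the Fisher information. -/
theorem bbm_location_variance_bound
    (r : ℕ) (k k' : ℝ → ℝ → ℝ)
    (hkpos : ∀ y t, 0 < k y t)
    (w : Fin r → ℝ) (θv : Fin r → ℝ) (j : Fin r)
    (hw : ∀ i, 0 ≤ w i) (hwj : 0 < w j) (hsum : ∑ i, w i = 1)
    (p : ℝ → ℝ) (hp : ∀ y, p y = ∑ i, w i * k y (θv i))
    (β θ0 : ℝ)
    (hfisher : Integrable (fun y => (k' y (θv j)) ^ 2 / k y (θv j)) volume)
    (hvar : Integrable (fun y => (k' y (θv j)) ^ 2 / p y) volume) :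
    (∫ y, (θ0 + β * w j * k' y (θv j) / p y - θ0) ^ 2 * p y)
        = β ^ 2 * (w j) ^ 2 * ∫ y, (k' y (θv j)) ^ 2 / p y ∧
    β ^ 2 * (w j) ^ 2 * (∫ y, (k' y (θv j)) ^ 2 / p y)
        ≤ β ^ 2 * w j * ∫ y, (k' y (θv j)) ^ 2 / k y (θv j) := by
  have hple : ∀ y, w j * k y (θv j) ≤ p y := by
    intro y
    rw [hp y]
    exact Finset.single_le_sum (fun i _ => mul_nonneg (hw i) (hkpos y (θv i)).le)
      (Finset.mem_univ j)
  have hppos : ∀ y, 0 < p y := fun y =>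
    lt_of_lt_of_le (mul_pos hwj (hkpos y (θv j))) (hple y)
  constructor
  · rw [← integral_const_mul]
    congr 1
    funext y
    have hpne := (hppos y).ne'
    field_simp
    ring
  · have h1 : β ^ 2 * (w j) ^ 2 * (∫ y, (k' y (θv j)) ^ 2 / p y)
        = β ^ 2 * w j * ∫ y, w j * ((k' y (θv j)) ^ 2 / p y) := by
      rw [integral_const_mul]; ring
    rw [h1]
    apply mul_le_mul_of_nonneg_left _ (mul_nonneg (sq_nonneg β) hwj.le)
    apply integral_mono (hvar.const_mul _) hfisher
    intro y
    have hk := hkpos y (θv j)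
    simp only []
    rw [mul_div_assoc', div_le_div_iff₀ (hppos y) hk]
    have : w j * k' y (θv j) ^ 2 * k y (θv j)
        = k' y (θv j) ^ 2 * (w j * k y (θv j)) := by ring
    rw [this]
    exact mul_le_mul_of_nonneg_left (hple y) (sq_nonneg _)
end

section
/- If a sequence of random probability measures (P_m) on ℝ satisfies P_m(−∞,y] → P_∞(−∞,y] almost surely for each y, and the sequence of mean measures E[P_m] is tight, then P_∞ is almost surely a probability measure and P_m converges weakly to P_∞ almost surely. -/
open MeasureTheory Filter
open scoped ENNReal

section Auxiliary

open Set BoundedContinuousFunction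
open scoped ENNReal

/-- Union of `Ioc` intervals with rational endpoints given by a list of pairs. -/
def US : List (ℚ × ℚ) → Set ℝ
  | [] => ∅
  | p :: L => Set.Ioc (p.1 : ℝ) (p.2 : ℝ) ∪ US L

lemma mem_US {x : ℝ} : ∀ {L : List (ℚ × ℚ)}, x ∈ US L ↔ ∃ p ∈ L, x ∈ Set.Ioc (p.1 : ℝ) (p.2 : ℝ)
  | [] => by simp [US]
  | p :: L => by simp [US, mem_US (L := L)]

lemma measurableSet_US : ∀ L : List (ℚ × ℚ), MeasurableSet (US L)
  | [] => MeasurableSet.empty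
  | _ :: L => (measurableSet_Ioc).union (measurableSet_US L)

lemma US_inter_Ioc (a b : ℚ) : ∀ L : List (ℚ × ℚ),
    US L ∩ Set.Ioc (a : ℝ) (b : ℝ) = US (L.map fun p => (p.1 ⊔ a, p.2 ⊓ b))
  | [] => by simp [US]
  | p :: L => by
    simp only [US, List.map_cons, Set.union_inter_distrib_right, US_inter_Ioc a b L,
      Set.Ioc_inter_Ioc]
    push_cast
    rfl

variable {ν : ℕ → Measure ℝ} [∀ m, IsProbabilityMeasure (ν m)]
  {νl : Measure ℝ} [IsFiniteMeasure νl]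

lemma toReal_Ioc_eq (κ : Measure ℝ) [IsFiniteMeasure κ] {a b : ℝ} (hab : a ≤ b) :
    (κ (Set.Ioc a b)).toReal = (κ (Set.Iic b)).toReal - (κ (Set.Iic a)).toReal := by
  have h1 : Set.Iic a ∪ Set.Ioc a b = Set.Iic b := Set.Iic_union_Ioc_eq_Iic hab
  have h2 : κ (Set.Iic a ∪ Set.Ioc a b) = κ (Set.Iic a) + κ (Set.Ioc a b) :=
    measure_union (Set.Iic_disjoint_Ioc le_rfl) measurableSet_Ioc
  rw [h1] at h2
  rw [h2, ENNReal.toReal_add (measure_ne_top κ _) (measure_ne_top κ _)]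
  ring

lemma tendsto_Ioc
    (h : ∀ q : ℚ, Tendsto (fun m => (ν m (Set.Iic (q : ℝ))).toReal) atTop
      (nhds ((νl (Set.Iic (q : ℝ))).toReal)))
    (a b : ℚ) :
    Tendsto (fun m => (ν m (Set.Ioc (a : ℝ) (b : ℝ))).toReal) atTop
      (nhds ((νl (Set.Ioc (a : ℝ) (b : ℝ))).toReal)) := by
  rcases le_or_gt b a with hba | hab
  · have : Set.Ioc (a : ℝ) (b : ℝ) = ∅ := Set.Ioc_eq_empty_of_le (by exact_mod_cast hba)
    simp [this]
  · have hab' : (a : ℝ) ≤ b := by exact_mod_cast hab.le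
    have key : ∀ (κ : Measure ℝ) [IsFiniteMeasure κ], (κ (Set.Ioc (a : ℝ) b)).toReal
        = (κ (Set.Iic (b : ℝ))).toReal - (κ (Set.Iic (a : ℝ))).toReal :=
      fun κ _ => toReal_Ioc_eq κ hab'
    simp_rw [key]
    exact (h b).sub (h a)

lemma toReal_union_eq (κ : Measure ℝ) [IsFiniteMeasure κ] {s t : Set ℝ} (ht : MeasurableSet t) :
    (κ (s ∪ t)).toReal = (κ s).toReal + (κ t).toReal - (κ (s ∩ t)).toReal := by
  have h := measure_union_add_inter (μ := κ) s ht
  have h' := congrArg ENNReal.toReal h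
  rw [ENNReal.toReal_add (measure_ne_top κ _) (measure_ne_top κ _),
    ENNReal.toReal_add (measure_ne_top κ _) (measure_ne_top κ _)] at h'
  linarith

lemma tendsto_US
    (h : ∀ a b : ℚ, Tendsto (fun m => (ν m (Set.Ioc (a : ℝ) (b : ℝ))).toReal) atTop
      (nhds ((νl (Set.Ioc (a : ℝ) (b : ℝ))).toReal))) :
    ∀ (n : ℕ) (L : List (ℚ × ℚ)), L.length ≤ n →
      Tendsto (fun m => (ν m (US L)).toReal) atTop (nhds ((νl (US L)).toReal)) := by
  intro n
  induction n with
  | zero =>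
    intro L hL
    have hL0 : L = [] := List.eq_nil_of_length_eq_zero (Nat.le_zero.mp hL)
    subst hL0
    simp [US]
  | succ n ih =>
    intro L hL
    match L with
    | [] => simp [US]
    | p :: L' =>
      have hL' : L'.length ≤ n := by simpa using hL
      have hmap : (L'.map fun q => (q.1 ⊔ p.1, q.2 ⊓ p.2)).length ≤ n := by simpa using hL'
      have key : ∀ (κ : Measure ℝ) [IsFiniteMeasure κ], (κ (US (p :: L'))).toReal
          = (κ (Set.Ioc (p.1 : ℝ) (p.2 : ℝ))).toReal + (κ (US L')).toReal
            - (κ (US (L'.map fun q => (q.1 ⊔ p.1, q.2 ⊓ p.2)))).toReal := by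
        intro κ _
        have := toReal_union_eq (s := Set.Ioc (p.1 : ℝ) (p.2 : ℝ)) (t := US L') κ
          (measurableSet_US L')
        rw [Set.inter_comm, US_inter_Ioc] at this
        exact this
      simp_rw [key]
      exact ((h p.1 p.2).add (ih L' hL')).sub (ih _ hmap)

lemma isOpen_le_liminf
    (h : ∀ a b : ℚ, Tendsto (fun m => (ν m (Set.Ioc (a : ℝ) (b : ℝ))).toReal) atTop
      (nhds ((νl (Set.Ioc (a : ℝ) (b : ℝ))).toReal)))
    {G : Set ℝ} (hG : IsOpen G) :
    νl G ≤ atTop.liminf fun m => ν m G := by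
  classical
  set e := Denumerable.eqv (ℚ × ℚ) with he
  set g : ℕ → ℚ × ℚ := fun n =>
    if Set.Ioc ((e.symm n).1 : ℝ) ((e.symm n).2 : ℝ) ⊆ G then e.symm n else (0, 0) with hg
  set J : ℕ → Set ℝ := fun n => Set.Ioc (((g n).1 : ℝ)) (((g n).2 : ℝ)) with hJ
  have hJG : ∀ n, J n ⊆ G := by
    intro n
    by_cases hc : Set.Ioc ((e.symm n).1 : ℝ) ((e.symm n).2 : ℝ) ⊆ G
    · simpa [hJ, hg, hc] using hc
    · simp [hJ, hg, hc]
  have hGJ : G = ⋃ n, J n := by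
    apply Set.Subset.antisymm
    · intro x hx
      obtain ⟨ε, hε, hb⟩ := Metric.isOpen_iff.mp hG x hx
      obtain ⟨q, hq1, hq2⟩ := exists_rat_btwn (show x - ε < x by linarith)
      obtain ⟨q', hq1', hq2'⟩ := exists_rat_btwn (show x < x + ε by linarith)
      have hsub : Set.Ioc (q : ℝ) (q' : ℝ) ⊆ G := by
        intro y hy
        apply hb
        rw [Metric.mem_ball, Real.dist_eq, abs_lt]
        exact ⟨by linarith [hy.1], by linarith [hy.2]⟩
      refine Set.mem_iUnion.mpr ⟨e (q, q'), ?_⟩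
      have hge : g (e (q, q')) = (q, q') := by
        simp only [hg, Equiv.symm_apply_apply]
        rw [if_pos hsub]
      simp only [hJ, hge]
      exact ⟨hq2, hq1'.le⟩
    · exact Set.iUnion_subset hJG
  set U : ℕ → Set ℝ := fun n => US ((List.range n).map g) with hU
  have hmemU : ∀ (x : ℝ) (n : ℕ), x ∈ U n ↔ ∃ i < n, x ∈ J i := by
    intro x n
    simp only [hU, mem_US, List.mem_map, List.mem_range]
    constructor
    · rintro ⟨p, ⟨i, hi, rfl⟩, hx⟩; exact ⟨i, hi, hx⟩
    · rintro ⟨i, hi, hx⟩; exact ⟨g i, ⟨i, hi, rfl⟩, hx⟩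
  have hmono : Monotone U := by
    intro n n' hnn' x hx
    obtain ⟨i, hi, hx⟩ := (hmemU x n).mp hx
    exact (hmemU x n').mpr ⟨i, lt_of_lt_of_le hi hnn', hx⟩
  have hUnion : (⋃ n, U n) = G := by
    rw [hGJ]
    ext x
    simp only [Set.mem_iUnion, hmemU]
    exact ⟨fun ⟨n, i, _, hx⟩ => ⟨i, hx⟩, fun ⟨i, hx⟩ => ⟨i + 1, i, Nat.lt_succ_self i, hx⟩⟩
  have h1 : Tendsto (fun n => νl (U n)) atTop (nhds (νl G)) := by
    have := tendsto_measure_iUnion_atTop (μ := νl) hmono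
    rwa [hUnion] at this
  refine le_of_tendsto h1 (Eventually.of_forall fun n => ?_)
  have hUG : U n ⊆ G := fun x hx => by
    obtain ⟨i, _, hx⟩ := (hmemU x n).mp hx; exact hJG i hx
  have htend : Tendsto (fun m => ν m (U n)) atTop (nhds (νl (U n))) := by
    rw [← ENNReal.tendsto_toReal_iff (fun m => measure_ne_top (ν m) _) (measure_ne_top νl _)]
    exact tendsto_US h _ _ le_rfl
  calc νl (U n) = atTop.liminf fun m => ν m (U n) := htend.liminf_eq.symm
    _ ≤ atTop.liminf fun m => ν m G :=
        liminf_le_liminf (Eventually.of_forall fun m => measure_mono hUG)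

/-- Deterministic statement: convergence of CDF at all rationals to the CDF of a probability
measure implies weak convergence. -/
lemma weak_conv_of_cdf {νl : Measure ℝ} [IsProbabilityMeasure νl]
    (h : ∀ q : ℚ, Tendsto (fun m => (ν m (Set.Iic (q : ℝ))).toReal) atTop
      (nhds ((νl (Set.Iic (q : ℝ))).toReal)))
    (f : BoundedContinuousFunction ℝ ℝ) :
    Tendsto (fun m => ∫ x, f x ∂(ν m)) atTop (nhds (∫ x, f x ∂νl)) := by
  refine tendsto_integral_of_forall_integral_le_liminf_integral (fun f f_nn => ?_) f
  exact integral_le_liminf_integral_of_forall_isOpen_measure_le_liminf_measure f_nn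
    (fun G hG => isOpen_le_liminf (tendsto_Ioc h) hG)

end Auxiliary

/-- If random probability measures P_m satisfy
P_m(−∞,y] → P_∞(−∞,y] a.s. for each y, and the mean measures E[P_m] are tight,
then P_∞ is a.s. a probability measure and P_m → P_∞ weakly a.s. -/
theorem random_measures_weak_convergence
    {Ω : Type*} {m0 : MeasurableSpace Ω} (μ : Measure Ω) [IsProbabilityMeasure μ]
    (P : ℕ → Ω → Measure ℝ) [∀ m ω, IsProbabilityMeasure (P m ω)]
    (Plim : Ω → Measure ℝ) [∀ ω, IsFiniteMeasure (Plim ω)]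
    (hcdf : ∀ y : ℝ, ∀ᵐ ω ∂μ,
      Tendsto (fun m => (P m ω (Set.Iic y)).toReal) atTop
        (nhds ((Plim ω (Set.Iic y)).toReal)))
    (htight : ∀ ε : ℝ, 0 < ε → ∃ A : Set ℝ, IsCompact A ∧ MeasurableSet A ∧
      ∀ m, 1 - ENNReal.ofReal ε < ∫⁻ ω, P m ω A ∂μ) :
    ∀ᵐ ω ∂μ, IsProbabilityMeasure (Plim ω) ∧
      ∀ f : BoundedContinuousFunction ℝ ℝ,
        Tendsto (fun m => ∫ x, f x ∂(P m ω)) atTop (nhds (∫ x, f x ∂(Plim ω))) := by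
  -- the a.e. set where CDFs converge at every rational
  have hE1 : ∀ᵐ ω ∂μ, ∀ q : ℚ, Tendsto (fun m => (P m ω (Set.Iic (q : ℝ))).toReal) atTop
      (nhds ((Plim ω (Set.Iic (q : ℝ))).toReal)) := ae_all_iff.mpr fun q => hcdf (q : ℝ)
  -- on that set, `Plim ω` has total mass at most 1
  have hub : ∀ ω, (∀ q : ℚ, Tendsto (fun m => (P m ω (Set.Iic (q : ℝ))).toReal) atTop
      (nhds ((Plim ω (Set.Iic (q : ℝ))).toReal))) → Plim ω Set.univ ≤ 1 := by
    intro ω hω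
    have hq : ∀ q : ℚ, Plim ω (Set.Iic (q : ℝ)) ≤ 1 := by
      intro q
      have h1 : (Plim ω (Set.Iic (q : ℝ))).toReal ≤ 1 :=
        le_of_tendsto' (hω q) fun m => by
          have := prob_le_one (μ := P m ω) (s := Set.Iic (q : ℝ))
          simpa using ENNReal.toReal_mono (by simp) this
      have := ENNReal.ofReal_le_ofReal h1
      rwa [ENNReal.ofReal_toReal (measure_ne_top _ _), ENNReal.ofReal_one] at this
    have htd : Tendsto (fun x : ℝ => Plim ω (Set.Iic x)) atTop (nhds (Plim ω Set.univ)) :=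
      tendsto_measure_Iic_atTop (Plim ω)
    refine le_of_tendsto htd (Eventually.of_forall fun x => ?_)
    obtain ⟨q, hq'⟩ := exists_rat_gt x
    exact le_trans (measure_mono (Set.Iic_subset_Iic.mpr hq'.le)) (hq q)
  -- the total mass integrates to at least 1, thanks to tightness
  have hlow : (1 : ℝ≥0∞) ≤ ∫⁻ ω, Plim ω Set.univ ∂μ := by
    have key : ∀ ε : ℝ, 0 < ε → 1 - ENNReal.ofReal ε ≤ ∫⁻ ω, Plim ω Set.univ ∂μ := by
      intro ε hε
      obtain ⟨A, hAc, -, hA⟩ := htight ε hε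
      -- A is contained in some `Iic q` with `q` rational
      obtain ⟨r, hr⟩ := hAc.isBounded.subset_closedBall 0
      obtain ⟨q, hq⟩ := exists_rat_gt r
      have hAq : A ⊆ Set.Iic (q : ℝ) := fun x hx => by
        have := hr hx
        rw [Metric.mem_closedBall, Real.dist_eq, sub_zero] at this
        exact le_trans (le_abs_self x) (le_trans this hq.le)
      set F : ℕ → Ω → ℝ≥0∞ := fun m ω => P m ω (Set.Iic (q : ℝ)) with hF
      -- measurable minorants with equal integrals
      have hpsi : ∀ m, ∃ ψ : Ω → ℝ≥0∞, Measurable ψ ∧ ψ ≤ F m ∧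
          ∫⁻ ω, F m ω ∂μ = ∫⁻ ω, ψ ω ∂μ := fun m => exists_measurable_le_lintegral_eq μ (F m)
      choose ψ hψm hψle hψint using hpsi
      have hlb : ∀ m, 1 - ENNReal.ofReal ε ≤ ∫⁻ ω, ψ m ω ∂μ := by
        intro m
        rw [← hψint m]
        exact le_trans (hA m).le (lintegral_mono fun ω => measure_mono hAq)
      have hψ1 : ∀ m, ψ m ≤ᵐ[μ] fun _ => (1 : ℝ≥0∞) :=
        fun m => Eventually.of_forall fun ω => le_trans (hψle m ω) (prob_le_one)
      have hrev : atTop.limsup (fun m => ∫⁻ ω, ψ m ω ∂μ) ≤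
          ∫⁻ ω, atTop.limsup (fun m => ψ m ω) ∂μ := by
        refine limsup_lintegral_le (fun _ => (1 : ℝ≥0∞)) hψm hψ1 ?_
        simp
      have hae : (fun ω => atTop.limsup (fun m => ψ m ω)) ≤ᵐ[μ] fun ω => Plim ω Set.univ := by
        filter_upwards [hE1] with ω hω
        have htends : Tendsto (fun m => F m ω) atTop (nhds (Plim ω (Set.Iic (q : ℝ)))) := by
          rw [← ENNReal.tendsto_toReal_iff (fun m => measure_ne_top _ _) (measure_ne_top _ _)]
          exact hω q
        calc atTop.limsup (fun m => ψ m ω)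
            ≤ atTop.limsup (fun m => F m ω) :=
              limsup_le_limsup (Eventually.of_forall fun m => hψle m ω)
          _ = Plim ω (Set.Iic (q : ℝ)) := htends.limsup_eq
          _ ≤ Plim ω Set.univ := measure_mono (Set.subset_univ _)
      calc (1 : ℝ≥0∞) - ENNReal.ofReal ε
          ≤ atTop.limsup (fun m => ∫⁻ ω, ψ m ω ∂μ) :=
            le_limsup_of_le (by isBoundedDefault) fun u hu => by
              obtain ⟨m, hm⟩ := hu.exists
              exact le_trans (hlb m) hm
        _ ≤ ∫⁻ ω, atTop.limsup (fun m => ψ m ω) ∂μ := hrev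
        _ ≤ ∫⁻ ω, Plim ω Set.univ ∂μ := lintegral_mono_ae hae
    by_contra hcon
    push_neg at hcon
    set X := ∫⁻ ω, Plim ω Set.univ ∂μ with hX
    have hXne : X ≠ ∞ := (lt_of_lt_of_le hcon le_top).ne
    have hXlt : X.toReal < 1 := by
      have := ENNReal.toReal_strict_mono (by simp) hcon
      simpa using this
    set ε : ℝ := (1 - X.toReal) / 2 with hεdef
    have hεpos : 0 < ε := by simp only [hεdef]; linarith
    have h1 := key ε hεpos
    have hε1 : ENNReal.ofReal ε ≤ 1 := by
      rw [← ENNReal.ofReal_one]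
      refine ENNReal.ofReal_le_ofReal ?_
      have : 0 ≤ X.toReal := ENNReal.toReal_nonneg
      simp only [hεdef]; linarith
    have h2 : (1 : ℝ≥0∞) - ENNReal.ofReal ε ≠ ∞ := by
      exact (lt_of_le_of_lt (tsub_le_self) (by simp)).ne
    have h3 := ENNReal.toReal_mono hXne h1
    rw [ENNReal.toReal_sub_of_le hε1 (by simp), ENNReal.toReal_one,
      ENNReal.toReal_ofReal hεpos.le] at h3
    simp only [hεdef] at h3
    linarith
  -- combine: total mass is a.e. equal to 1
  have hone : ∀ᵐ ω ∂μ, Plim ω Set.univ = 1 := by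
    have hle1 : (fun ω => Plim ω Set.univ) ≤ᵐ[μ] fun _ => (1 : ℝ≥0∞) := by
      filter_upwards [hE1] with ω hω using hub ω hω
    obtain ⟨ψ, hψm, hψle, hψint⟩ :=
      exists_measurable_le_lintegral_eq μ (fun ω => Plim ω Set.univ)
    have hψle1 : ψ ≤ᵐ[μ] fun _ => (1 : ℝ≥0∞) := by
      filter_upwards [hle1] with ω hω using le_trans (hψle ω) hω
    have hψne : ∫⁻ ω, ψ ω ∂μ ≠ ∞ := by
      refine (lt_of_le_of_lt (lintegral_mono_ae hψle1) ?_).ne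
      simp
    have hint1 : ∫⁻ ω, (1 : ℝ≥0∞) ∂μ ≤ ∫⁻ ω, ψ ω ∂μ := by
      rw [← hψint]
      simpa using hlow
    have hψeq : ψ =ᵐ[μ] fun _ => (1 : ℝ≥0∞) :=
      ae_eq_of_ae_le_of_lintegral_le hψle1 hψne aemeasurable_const hint1
    filter_upwards [hψeq, hle1] with ω h1 h2
    exact le_antisymm h2 (h1 ▸ hψle ω)
  filter_upwards [hE1, hone] with ω hω1 hω2
  haveI : IsProbabilityMeasure (Plim ω) := ⟨hω2⟩
  exact ⟨this, fun f => weak_conv_of_cdf (ν := fun m => P m ω) hω1 f⟩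
end
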